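/- Let q ∈ (0,1) and specialize a_n = q^{−2(n+1)}(1 − q^{n+1}) and k = q^{1/2}, so that α_n = q^{−2n−3/2}(1−q^{n+1}) and β_n = q^{−2(n+1)}(1 − q^{n+1} + q³(1 − q^n)). Then the orthonormal polynomials P_n defined by the three-term recurrence satisfy P_n(x) = (−1)^n q^{−n/2} L̃_n(x;q) for every n ≥ 0, as an identity of polynomials in x. -/

import Mathlib

/-!
Put `w = q ^ n`. The coefficient of `x ^ j` in `L̃_n(x;q)` is a rational function of `w` times
`(w; q⁻¹)_j`, which vanishes for `j > n`, and the recurrence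
`a_{n+1} L̃_{n+2} = (a_{n+1} + q a_n - x) L̃_{n+1} - q a_n L̃_n` becomes, coefficientwise, a rational
identity in `w`. Rescaling by `(-√q)^{-n}` turns it into the recurrence defining `P_n`
(`α_n = √q a_n`, `β_{n+1} = a_{n+1} + q a_n`), and since every `α_n ≠ 0` that recurrence
determines `P_n` from `P_0 = 1`.
-/

open scoped BigOperators

/-- The q-Pochhammer symbol `(w;q)_r = ∏_{i=0}^{r−1} (1 − q^i w)` (real version). -/
noncomputable def qPR (q w : ℝ) (r : ℕ) : ℝ := ∏ i ∈ Finset.range r, (1 - q ^ i * w)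

/-- The q-Laguerre polynomial
`L_n^{(α)}(x;q) = ((q^{α+1};q)_n/(q;q)_n) ₁φ₁(q^{−n}; q^{α+1}; q, −q^{n+α+1} x)`,
where `₁φ₁(a;b;q,z) = Σ_j ((a;q)_j/((b;q)_j (q;q)_j)) (−1)^j q^{j(j−1)/2} z^j`;
for `a = q^{−n}` the terms with `j > n` vanish, so the series is the finite sum below. -/
noncomputable def qLaguerre (q : ℝ) (α : ℕ) (n : ℕ) (x : ℝ) : ℝ :=
  (qPR q (q ^ (α + 1)) n / qPR q q n) *
    ∑ j ∈ Finset.range (n + 1),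
      qPR q ((q ^ n)⁻¹) j / (qPR q (q ^ (α + 1)) j * qPR q q j) *
        ((-1) ^ j * q ^ (j * (j - 1) / 2) * (-(q ^ (n + α + 1) * x)) ^ j)

/-- The modified q-Laguerre polynomial
`L̃_n(x;q) = q^{n+1} L_n^{(0)}(x;q) + (1−q) L_n^{(1)}(x;q)`. -/
noncomputable def qLaguerreMod (q : ℝ) (n : ℕ) (x : ℝ) : ℝ :=
  q ^ (n + 1) * qLaguerre q 0 n x + (1 - q) * qLaguerre q 1 n x

noncomputable def alph (a : ℕ → ℝ) (k : ℝ) (n : ℕ) : ℝ := k * a n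

noncomputable def bet (a : ℕ → ℝ) (k : ℝ) : ℕ → ℝ
  | 0 => a 0
  | n + 1 => a (n + 1) + k ^ 2 * a n

/-- The specialization `a_n = q^{−2(n+1)}(1 − q^{n+1})` of the sequence `a`. -/
noncomputable def aQ (q : ℝ) (n : ℕ) : ℝ := q ^ (-(2 : ℝ) * ((n : ℝ) + 1)) * (1 - q ^ (n + 1))

open Finset Polynomial

section Pochhammer

variable {q : ℝ}

theorem qPR_succ (q w : ℝ) (j : ℕ) : qPR q w (j + 1) = qPR q w j * (1 - q ^ j * w) :=
  prod_range_succ _ _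

theorem qPR_succ' (q w : ℝ) (j : ℕ) : qPR q w (j + 1) = (1 - w) * qPR q (q * w) j := by
  rw [qPR, qPR, prod_range_succ', mul_comm, pow_zero, one_mul]
  exact congrArg _ (prod_congr rfl fun i _ => by ring)

theorem qPR_inv_mul_succ (hq : q ≠ 0) (w : ℝ) (j : ℕ) :
    qPR q⁻¹ (w * q) (j + 1) = (1 - w * q) * qPR q⁻¹ w j := by
  rw [qPR_succ', mul_comm w q, inv_mul_cancel_left₀ hq]

theorem qPR_ne_zero (hq : ∀ n, q ^ (n + 1) ≠ 1) (j : ℕ) : qPR q q j ≠ 0 :=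
  prod_ne_zero_iff.2 fun i _ => by rw [← pow_succ]; exact sub_ne_zero.2 (hq i).symm

theorem qPR_inv_pow_eq_zero (hq : q ≠ 0) {n j : ℕ} (h : n < j) : qPR q⁻¹ (q ^ n) j = 0 :=
  prod_eq_zero (mem_range.2 h) (by rw [inv_pow, inv_mul_cancel₀ (pow_ne_zero n hq), sub_self])

theorem qPR_inv_mul_pow (hq : q ≠ 0) {w : ℝ} (hw : w ≠ 0) (j : ℕ) :
    qPR q w⁻¹ j * w ^ j = (-1) ^ j * q ^ (j * (j - 1) / 2) * qPR q⁻¹ w j := by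
  have hfactor : ∀ i : ℕ, (1 - q ^ i * w⁻¹) * w = -1 * q ^ i * (1 - q⁻¹ ^ i * w) := by
    intro i
    rw [inv_pow]
    field_simp
    ring
  have h := prod_congr (s₁ := range j) rfl fun i _ => hfactor i
  rwa [prod_mul_distrib, prod_mul_distrib, prod_mul_distrib, prod_const, prod_const, card_range,
    prod_pow_eq_pow_sum, sum_range_id] at h

end Pochhammer

theorem pow_triangle_sq_mul_pow (q : ℝ) (j : ℕ) :
    (q ^ (j * (j - 1) / 2)) ^ 2 * q ^ j = q ^ j ^ 2 := by
  rw [← pow_mul, ← pow_add, Nat.div_two_mul_two_of_even (Nat.even_mul_pred_self j)]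
  cases j with
  | zero => rfl
  | succ m => congr 1; rw [Nat.add_sub_cancel]; ring

section Coefficients

variable {q : ℝ}

theorem qLaguerre_eq_sum (hq : q ≠ 0) (α n : ℕ) (x : ℝ) :
    qLaguerre q α n x = ∑ j ∈ range (n + 1),
      (-1) ^ j * q ^ (j ^ 2 + α * j) * qPR q (q ^ (α + 1)) n * qPR q⁻¹ (q ^ n) j
        / (qPR q q n * qPR q (q ^ (α + 1)) j * qPR q q j) * x ^ j := by
  rw [qLaguerre, mul_sum]
  refine sum_congr rfl fun j _ => ?_
  have hsign : ((-1 : ℝ) ^ j) ^ 2 = 1 := by rw [← pow_mul, pow_mul', neg_one_sq, one_pow]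
  have hterm : qPR q (q ^ n)⁻¹ j * ((-1) ^ j * q ^ (j * (j - 1) / 2) * (-(q ^ (n + α + 1) * x)) ^ j)
      = (-1) ^ j * q ^ (j ^ 2 + α * j) * qPR q⁻¹ (q ^ n) j * x ^ j := calc
    _ = qPR q (q ^ n)⁻¹ j * (q ^ n) ^ j * (-1) ^ j * q ^ (j * (j - 1) / 2)
          * (-1) ^ j * q ^ (α * j) * q ^ j * x ^ j := by ring
    _ = ((-1) ^ j) ^ 2 * (-1) ^ j * ((q ^ (j * (j - 1) / 2)) ^ 2 * q ^ j) * q ^ (α * j)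
          * qPR q⁻¹ (q ^ n) j * x ^ j := by rw [qPR_inv_mul_pow hq (pow_ne_zero n hq)]; ring
    _ = _ := by rw [hsign, pow_triangle_sq_mul_pow]; ring
  linear_combination qPR q (q ^ (α + 1)) n / qPR q q n / (qPR q (q ^ (α + 1)) j * qPR q q j) * hterm

/-- Here `qPR q⁻¹ w j = ∏_{i<j} (1 - w q^{-i})`. At `w = q ^ n` this is the coefficient of `x ^ j`
in `L̃_n(x;q)`; keeping `w` free turns the recurrence of `L̃_n` into a rational identity in `w`
(`qLaguerreModCoeff_rec`). -/
noncomputable def qLaguerreModCoeff (q w : ℝ) (j : ℕ) : ℝ :=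
  (-1) ^ j * q ^ j ^ 2 * qPR q⁻¹ w j * (q ^ j * (1 - q) + q * w * (1 - q ^ j))
    / (qPR q q j * qPR q q (j + 1))

theorem qLaguerreMod_eq_sum (hq : q ≠ 0) (hq' : ∀ n, q ^ (n + 1) ≠ 1) (n : ℕ) (x : ℝ) :
    qLaguerreMod q n x = ∑ j ∈ range (n + 1), qLaguerreModCoeff q (q ^ n) j * x ^ j := by
  rw [qLaguerreMod, qLaguerre_eq_sum hq, qLaguerre_eq_sum hq, mul_sum, mul_sum, ← sum_add_distrib]
  refine sum_congr rfl fun j _ => ?_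
  have h1 : (1 : ℝ) - q ≠ 0 := sub_ne_zero.2 (by simpa using (hq' 0).symm)
  have hj : (1 : ℝ) - q ^ (j + 1) ≠ 0 := sub_ne_zero.2 (hq' j).symm
  have hn : (1 : ℝ) - q ^ (n + 1) ≠ 0 := sub_ne_zero.2 (hq' n).symm
  have hPn := qPR_ne_zero hq' n
  have hPj := qPR_ne_zero hq' j
  have hsq : ∀ m, qPR q (q ^ (1 + 1)) m = qPR q q (m + 1) / (1 - q) := fun m => by
    rw [eq_div_iff h1, qPR_succ' q q m, mul_comm, ← pow_two, one_add_one_eq_two]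
  rw [qLaguerreModCoeff, hsq, hsq, qPR_succ q q n, qPR_succ q q j, ← pow_succ, ← pow_succ]
  simp only [zero_add, pow_one, zero_mul, add_zero, one_mul]
  field_simp
  ring

theorem qLaguerreModCoeff_zero (hq : q ≠ 1) (w : ℝ) : qLaguerreModCoeff q w 0 = 1 := by
  have h : (1 : ℝ) - q ≠ 0 := sub_ne_zero.2 hq.symm
  simp [qLaguerreModCoeff, qPR, h]

theorem qLaguerreModCoeff_pow_eq_zero (hq : q ≠ 0) {n j : ℕ} (h : n < j) :
    qLaguerreModCoeff q (q ^ n) j = 0 := by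
  simp [qLaguerreModCoeff, qPR_inv_pow_eq_zero hq h]

noncomputable def aQOfPow (q w : ℝ) : ℝ := (1 - q * w) / (q * w) ^ 2

theorem qLaguerreModCoeff_rec (hq : q ≠ 0) (hq' : ∀ n, q ^ (n + 1) ≠ 1) {w : ℝ} (hw : w ≠ 0)
    (j : ℕ) :
    aQOfPow q (w * q) * qLaguerreModCoeff q (w * q * q) (j + 1)
      = (aQOfPow q (w * q) + q * aQOfPow q w) * qLaguerreModCoeff q (w * q) (j + 1)
        - qLaguerreModCoeff q (w * q) j - q * aQOfPow q w * qLaguerreModCoeff q w (j + 1) := by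
  have hP := qPR_ne_zero hq'
  have h : ∀ n, (1 : ℝ) - q ^ (n + 1) ≠ 0 := fun n => sub_ne_zero.2 (hq' n).symm
  cases j with
  | zero =>
    have h0 : (1 : ℝ) - q ≠ 0 := by simpa using h 0
    have h1 : (1 : ℝ) - q ^ 2 ≠ 0 := h 1
    simp only [qLaguerreModCoeff, aQOfPow, qPR, prod_range_succ, prod_range_zero, zero_add,
      pow_zero, pow_one, one_pow, one_mul, mul_one, sub_self, mul_zero, add_zero]
    field_simp
    ring
  | succ m =>
    -- every Pochhammer factor is expressed through `qPR q⁻¹ w m` and `qPR q q m`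
    rw [qLaguerreModCoeff, qLaguerreModCoeff, qLaguerreModCoeff, qLaguerreModCoeff,
      qPR_inv_mul_succ hq, qPR_inv_mul_succ hq, qPR_succ q⁻¹ w (m + 1), qPR_inv_mul_succ hq,
      qPR_succ q⁻¹ w m, qPR_succ q q (m + 1 + 1), qPR_succ q q (m + 1), qPR_succ q q m,
      ← pow_succ, ← pow_succ, ← pow_succ]
    have h0 := h m
    have h1 := h (m + 1)
    have h2 := h (m + 2)
    have hPm := hP m
    simp only [aQOfPow, inv_pow]
    field_simp
    ring

end Coefficients

section Polynomial

variable {q : ℝ}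

noncomputable def qLaguerreModPoly (q : ℝ) (n : ℕ) : ℝ[X] :=
  ∑ j ∈ range (n + 1), C (qLaguerreModCoeff q (q ^ n) j) * X ^ j

theorem coeff_qLaguerreModPoly (hq : q ≠ 0) (n j : ℕ) :
    (qLaguerreModPoly q n).coeff j = qLaguerreModCoeff q (q ^ n) j := by
  simp only [qLaguerreModPoly, finsetSum_coeff, coeff_C_mul_X_pow, sum_ite_eq, mem_range]
  split_ifs with h
  · rfl
  · exact (qLaguerreModCoeff_pow_eq_zero hq (by omega)).symm

theorem qLaguerreMod_eq_eval (hq : q ≠ 0) (hq' : ∀ n, q ^ (n + 1) ≠ 1) (n : ℕ) (x : ℝ) :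
    qLaguerreMod q n x = (qLaguerreModPoly q n).eval x := by
  simp [qLaguerreModPoly, eval_finsetSum, qLaguerreMod_eq_sum hq hq']

theorem qLaguerreModPoly_rec (hq : q ≠ 0) (hq' : ∀ n, q ^ (n + 1) ≠ 1) (k : ℕ) :
    C (aQOfPow q (q ^ (k + 1))) * qLaguerreModPoly q (k + 2)
      = (C (aQOfPow q (q ^ (k + 1)) + q * aQOfPow q (q ^ k)) - X) * qLaguerreModPoly q (k + 1)
        - C (q * aQOfPow q (q ^ k)) * qLaguerreModPoly q k := by
  ext j
  simp only [coeff_sub, sub_mul, coeff_C_mul, coeff_qLaguerreModPoly hq]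
  rcases j with _ | j
  · simp only [coeff_X_mul_zero, qLaguerreModCoeff_zero (by simpa using hq' 0)]
    ring
  · rw [coeff_X_mul, coeff_qLaguerreModPoly hq]
    simpa [pow_succ] using qLaguerreModCoeff_rec hq hq' (pow_ne_zero k hq) j

end Polynomial

section Recurrence

variable {q : ℝ}

theorem qLaguerreMod_zero (hq : q ≠ 0) (hq' : ∀ n, q ^ (n + 1) ≠ 1) (x : ℝ) :
    qLaguerreMod q 0 x = 1 := by
  simp [qLaguerreMod_eq_sum hq hq', qLaguerreModCoeff_zero (by simpa using hq' 0)]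

theorem qLaguerreMod_one (hq : q ≠ 0) (hq' : ∀ n, q ^ (n + 1) ≠ 1) (x : ℝ) :
    aQOfPow q 1 * qLaguerreMod q 1 x = aQOfPow q 1 - x := by
  have h1 : (1 : ℝ) - q ≠ 0 := sub_ne_zero.2 (by simpa using (hq' 0).symm)
  have h2 : (1 : ℝ) - q ^ 2 ≠ 0 := sub_ne_zero.2 (hq' 1).symm
  rw [qLaguerreMod_eq_sum hq hq', sum_range_succ, sum_range_one,
    qLaguerreModCoeff_zero (by simpa using hq' 0)]
  simp only [qLaguerreModCoeff, aQOfPow, qPR, prod_range_succ, prod_range_zero]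
  field_simp
  ring

theorem qLaguerreMod_rec (hq : q ≠ 0) (hq' : ∀ n, q ^ (n + 1) ≠ 1) (k : ℕ) (x : ℝ) :
    aQOfPow q (q ^ (k + 1)) * qLaguerreMod q (k + 2) x
      = (aQOfPow q (q ^ (k + 1)) + q * aQOfPow q (q ^ k) - x) * qLaguerreMod q (k + 1) x
        - q * aQOfPow q (q ^ k) * qLaguerreMod q k x := by
  simpa [qLaguerreMod_eq_eval hq hq'] using congrArg (eval x) (qLaguerreModPoly_rec hq hq' k)

theorem aQ_eq_aQOfPow (hq : 0 < q) (n : ℕ) : aQ q n = aQOfPow q (q ^ n) := by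
  rw [aQ, aQOfPow, ← pow_succ',
    show -(2 : ℝ) * ((n : ℝ) + 1) = -((2 * (n + 1) : ℕ) : ℝ) by push_cast; ring,
    Real.rpow_neg hq.le, Real.rpow_natCast, pow_mul', div_eq_inv_mul, mul_comm]

theorem aQ_pos (hq0 : 0 < q) (hq1 : q < 1) (n : ℕ) : 0 < aQ q n :=
  mul_pos (Real.rpow_pos_of_pos hq0 _) (sub_pos.2 (pow_lt_one₀ hq0.le hq1 n.succ_ne_zero))

end Recurrence

def IsThreeTermSolution (α β : ℕ → ℝ) (x : ℝ) (u : ℕ → ℝ) : Prop :=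
  α 0 * u 1 + (β 0 - x) * u 0 = 0 ∧
    ∀ n, 1 ≤ n → α n * u (n + 1) + (β n - x) * u n + α (n - 1) * u (n - 1) = 0

theorem IsThreeTermSolution.eq {α β : ℕ → ℝ} (hα : ∀ n, α n ≠ 0) {x : ℝ} {u v : ℕ → ℝ}
    (hu : IsThreeTermSolution α β x u) (hv : IsThreeTermSolution α β x v) (h0 : u 0 = v 0) :
    u = v := by
  funext n
  induction n using Nat.strong_induction_on with
  | _ n ih =>
    rcases n with _ | _ | n
    · exact h0
    · refine mul_left_cancel₀ (hα 0) ?_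
      linear_combination hu.1 - hv.1 - (β 0 - x) * h0
    · refine mul_left_cancel₀ (hα (n + 1)) ?_
      have hu' := hu.2 (n + 1) (by omega)
      have hv' := hv.2 (n + 1) (by omega)
      simp only [Nat.add_sub_cancel] at hu' hv'
      linear_combination hu' - hv' - (β (n + 1) - x) * ih (n + 1) (by omega) - α n * ih n (by omega)

theorem isThreeTermSolution_alph_bet {a : ℕ → ℝ} {k : ℝ} (hk : k ≠ 0) {x : ℝ} {L : ℕ → ℝ}
    (h1 : a 0 * L 1 = (a 0 - x) * L 0)
    (hrec : ∀ n, a (n + 1) * L (n + 2)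
      = (a (n + 1) + k ^ 2 * a n - x) * L (n + 1) - k ^ 2 * a n * L n) :
    IsThreeTermSolution (alph a k) (bet a k) x fun n => (-k)⁻¹ ^ n * L n := by
  have hk' : k * (-k)⁻¹ = -1 := by rw [inv_neg, mul_neg, mul_inv_cancel₀ hk]
  refine ⟨?_, fun n hn => ?_⟩
  · simp only [alph, bet]
    linear_combination a 0 * L 1 * hk' - h1
  · obtain ⟨n, rfl⟩ := Nat.exists_eq_add_of_le' hn
    simp only [alph, bet, Nat.add_sub_cancel]
    linear_combination (a (n + 1) * L (n + 2) * (-k)⁻¹ ^ (n + 1) + a n * L n * k * (-k)⁻¹ ^ n) * hk'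
      - (-k)⁻¹ ^ (n + 1) * hrec n

theorem neg_sqrt_inv_pow {q : ℝ} (hq : 0 ≤ q) (n : ℕ) :
    (-Real.sqrt q)⁻¹ ^ n = (-1) ^ n * q ^ (-(n : ℝ) / 2) := by
  rw [inv_neg, neg_pow, Real.sqrt_eq_rpow, ← Real.rpow_neg hq, ← Real.rpow_mul_natCast hq]
  ring_nf

/-- With `a_n = q^{−2(n+1)}(1−q^{n+1})` and `k = q^{1/2}` (so that
`α_n = q^{−2n−3/2}(1−q^{n+1})` and `β_n = q^{−2(n+1)}(1−q^{n+1}+q³(1−q^n))`), the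
orthonormal polynomials of the three-term recurrence satisfy
`P_n(x) = (−1)^n q^{−n/2} L̃_n(x;q)` for all `n`. -/
theorem statement18 (q : ℝ) (hq : q ∈ Set.Ioo (0 : ℝ) 1)
    (P : ℕ → ℝ → ℝ)
    (hP0 : ∀ x, P 0 x = 1)
    (hP1 : ∀ x, alph (aQ q) (Real.sqrt q) 0 * P 1 x
      + (bet (aQ q) (Real.sqrt q) 0 - x) * P 0 x = 0)
    (hPrec : ∀ n, 1 ≤ n → ∀ x,
      alph (aQ q) (Real.sqrt q) n * P (n + 1) x
        + (bet (aQ q) (Real.sqrt q) n - x) * P n x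
        + alph (aQ q) (Real.sqrt q) (n - 1) * P (n - 1) x = 0) :
    ∀ (n : ℕ) (x : ℝ), P n x = (-1 : ℝ) ^ n * q ^ (-(n : ℝ) / 2) * qLaguerreMod q n x := by
  obtain ⟨hq0, hq1⟩ := hq
  have hq' : ∀ n, q ^ (n + 1) ≠ 1 := fun n => (pow_lt_one₀ hq0.le hq1 n.succ_ne_zero).ne
  have hsqrt : 0 < Real.sqrt q := Real.sqrt_pos.2 hq0
  intro n x
  have hL : IsThreeTermSolution (alph (aQ q) (Real.sqrt q)) (bet (aQ q) (Real.sqrt q)) x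
      fun n => (-Real.sqrt q)⁻¹ ^ n * qLaguerreMod q n x := by
    refine isThreeTermSolution_alph_bet hsqrt.ne' ?_ fun k => ?_
    · simpa [aQ_eq_aQOfPow hq0, qLaguerreMod_zero hq0.ne' hq'] using qLaguerreMod_one hq0.ne' hq' x
    · rw [Real.sq_sqrt hq0.le, aQ_eq_aQOfPow hq0, aQ_eq_aQOfPow hq0]
      exact qLaguerreMod_rec hq0.ne' hq' k x
  have hP : IsThreeTermSolution (alph (aQ q) (Real.sqrt q)) (bet (aQ q) (Real.sqrt q)) x
      fun n => P n x := ⟨hP1 x, fun n hn => hPrec n hn x⟩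
  have h := hP.eq (fun n => (mul_pos hsqrt (aQ_pos hq0 hq1 n)).ne') hL
    (by simp [hP0, qLaguerreMod_zero hq0.ne' hq'])
  rw [congrFun h n, neg_sqrt_inv_pow hq0.le]
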